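/- arXiv:2103.16647 — 4 statements merged into one kernel-verified Lean document; each statement's English description precedes it below -/
import Mathlib

section
/- Let Q ⊆ ℝ^p be a nonempty finite set and Q⁺ = conv(Q) + ℝ^p_{≥0}. A point y* ∈ ℝ^p lies outside Q⁺ if and only if there exists w ∈ ℝ^p with w_i ≥ 0 for all i, ∑_i w_i = 1, and α ∈ ℝ such that wᵀy ≥ α for all y ∈ Q but wᵀy* < α. -/
/-!
`Q⁺` is convex, and closed because `conv Q` is compact, so Hahn–Banach strictly separates `y*`
from it by a linear functional `w`. As `Q⁺` is stable under adding nonnegative vectors, `w` is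
bounded below along every coordinate ray, which forces `w ≥ 0`; being separating, `w ≠ 0`, so it
can be rescaled to sum to `1`. Conversely, a halfspace `{y | α ≤ wᵀy}` with `w ≥ 0` is convex and
stable under adding nonnegative vectors, so it contains `Q⁺` as soon as it contains `Q`.
-/

open Pointwise

section

variable {ι : Type*} [Fintype ι]

lemma LinearMap.apply_eq_single_dotProduct [DecidableEq ι] (f : (ι → ℝ) →ₗ[ℝ] ℝ)
    (y : ι → ℝ) : f y = (fun i => f (Pi.single i 1)) ⬝ᵥ y := by
  conv_lhs => rw [← Finset.univ_sum_single y]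
  simp only [map_sum, dotProduct, mul_comm]
  refine Finset.sum_congr rfl fun i _ => ?_
  rw [← smul_eq_mul, ← map_smul, ← Pi.single_smul, smul_eq_mul, mul_one]

lemma LinearMap.nonneg_of_forall_le_apply_add_smul {E : Type*} [AddCommGroup E] [Module ℝ E]
    (f : E →ₗ[ℝ] ℝ) {c v : E} {u : ℝ} (h : ∀ t : ℝ, 0 ≤ t → u ≤ f (c + t • v)) :
    0 ≤ f v := by
  by_contra! hv
  have hc : u ≤ f c := by simpa using h 0 le_rfl
  have ht : (f c - u + 1) / -f v * f v = u - f c - 1 := by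
    field_simp [hv.ne]
    ring
  have := h ((f c - u + 1) / -f v) (div_nonneg (by linarith) (by linarith))
  rw [map_add, map_smul, smul_eq_mul, ht] at this
  linarith

lemma inv_sum_smul_mem_stdSimplex {w : ι → ℝ} (hw : 0 < w) :
    (∑ i, w i)⁻¹ • w ∈ stdSimplex ℝ ι := by
  have hsum : 0 < ∑ i, w i := Fintype.sum_pos hw
  refine ⟨fun i => smul_nonneg (inv_nonneg.2 hsum.le) (hw.le i), ?_⟩
  simp [← Finset.mul_sum, hsum.ne']

variable {s : Set (ι → ℝ)} {y : ι → ℝ}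

theorem exists_pos_separating_of_notMem_add_Ici (hs : s.Nonempty) (hconv : Convex ℝ s)
    (hclosed : IsClosed (s + Set.Ici 0)) (hy : y ∉ s + Set.Ici 0) :
    ∃ w, 0 < w ∧ ∃ α, (∀ x ∈ s, α < w ⬝ᵥ x) ∧ w ⬝ᵥ y < α := by
  classical
  obtain ⟨f, u, hfy, hfs⟩ :=
    geometric_hahn_banach_point_closed (hconv.add (convex_Ici 0)) hclosed hy
  set w : ι → ℝ := fun i => f (Pi.single i 1)
  have hf (x : ι → ℝ) : f x = w ⬝ᵥ x := (f : (ι → ℝ) →ₗ[ℝ] ℝ).apply_eq_single_dotProduct x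
  have hfs' (x : ι → ℝ) (hx : x ∈ s) : u < f x :=
    hfs x (Set.subset_add_left s Set.self_mem_Ici hx)
  obtain ⟨x₀, hx₀⟩ := hs
  have hw : 0 ≤ w := fun i =>
    (f : (ι → ℝ) →ₗ[ℝ] ℝ).nonneg_of_forall_le_apply_add_smul fun t ht =>
      have hv : t • Pi.single i (1 : ℝ) ∈ Set.Ici 0 :=
        Set.mem_Ici.2 (smul_nonneg ht (Pi.single_nonneg.2 zero_le_one))
      (hfs _ (Set.add_mem_add hx₀ hv)).le
  have hw0 : w ≠ 0 := by
    intro hw0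
    have := hfs' x₀ hx₀
    simp only [hf, hw0, zero_dotProduct] at hfy this
    linarith
  exact ⟨w, hw.lt_of_ne' hw0, u, fun x hx => hf x ▸ hfs' x hx, hf y ▸ hfy⟩

theorem exists_mem_stdSimplex_separating_of_notMem_add_Ici (hs : s.Nonempty)
    (hconv : Convex ℝ s) (hclosed : IsClosed (s + Set.Ici 0)) (hy : y ∉ s + Set.Ici 0) :
    ∃ w ∈ stdSimplex ℝ ι, ∃ α, (∀ x ∈ s, α < w ⬝ᵥ x) ∧ w ⬝ᵥ y < α := by
  obtain ⟨w, hw, α, hsα, hyα⟩ := exists_pos_separating_of_notMem_add_Ici hs hconv hclosed hy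
  have hc : 0 < (∑ i, w i)⁻¹ := inv_pos.2 (Fintype.sum_pos hw)
  refine ⟨_, inv_sum_smul_mem_stdSimplex hw, (∑ i, w i)⁻¹ * α, fun x hx => ?_, ?_⟩
  · rw [smul_dotProduct, smul_eq_mul]
    exact mul_lt_mul_of_pos_left (hsα x hx) hc
  · rw [smul_dotProduct, smul_eq_mul]
    exact mul_lt_mul_of_pos_left hyα hc

lemma le_dotProduct_of_mem_convexHull_add_Ici {Q : Set (ι → ℝ)} {w : ι → ℝ} {α : ℝ}
    (hw : 0 ≤ w) (hQ : ∀ y ∈ Q, α ≤ w ⬝ᵥ y) {x : ι → ℝ}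
    (hx : x ∈ convexHull ℝ Q + Set.Ici 0) : α ≤ w ⬝ᵥ x := by
  obtain ⟨c, hc, r, hr, rfl⟩ := hx
  have hαc : α ≤ w ⬝ᵥ c := convexHull_min hQ
    (convex_halfSpace_ge ⟨dotProduct_add w, fun a x => dotProduct_smul a w x⟩ α) hc
  rw [dotProduct_add]
  linarith [dotProduct_nonneg_of_nonneg hw hr]

end

theorem outside_iff_separating_hyperplane
    (p : ℕ) (Q : Set (Fin p → ℝ)) (hfin : Q.Finite) (hne : Q.Nonempty)
    (ystar : Fin p → ℝ) :
    ystar ∉ convexHull ℝ Q + {r : Fin p → ℝ | ∀ i, 0 ≤ r i} ↔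
      ∃ (w : Fin p → ℝ) (α : ℝ), (∀ i, 0 ≤ w i) ∧ (∑ i, w i = 1) ∧
        (∀ y ∈ Q, α ≤ ∑ i, w i * y i) ∧ ∑ i, w i * ystar i < α := by
  change ystar ∉ convexHull ℝ Q + Set.Ici 0 ↔ _
  constructor
  · intro hy
    have hclosed : IsClosed (convexHull ℝ Q + Set.Ici 0) :=
      isClosed_Ici.add_left_of_isCompact (hfin.isCompact_convexHull ℝ)
    obtain ⟨w, ⟨hw, hw1⟩, α, hQ, hyα⟩ := exists_mem_stdSimplex_separating_of_notMem_add_Ici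
      hne.convexHull (convex_convexHull ℝ Q) hclosed hy
    exact ⟨w, α, hw, hw1, fun q hq => (hQ q (subset_convexHull ℝ Q hq)).le, hyα⟩
  · rintro ⟨w, α, hw, -, hQ, hyα⟩ hy
    exact hyα.not_ge (le_dotProduct_of_mem_convexHull_add_Ici hw hQ hy)
end

section
/- Completeness of the target-cut oracle: let Q ⊆ ℝ^p be a nonempty finite set with all coordinates of all points strictly positive and y* ∈ ℝ^p. If y* ∉ conv(Q) + ℝ^p_{≥0}, then there exists w ∈ ℝ^p with w_i ≥ 0 for all i such that wᵀy ≥ 1 for all y ∈ Q and wᵀy* < 1. -/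
/-!
The set `S = conv Q + ℝ^p_{≥0}` is closed (a compact set plus a closed one), convex and upward
closed, so Hahn–Banach separates `y*` from it by a linear functional `w ⬝ᵥ ·`. A functional
bounded below on a nonempty upper set is nonnegative on the positive cone, so `w ≥ 0`; as `w ≠ 0`
and the points of `Q` are positive, `w ⬝ᵥ y > 0` on `Q`, and dividing `w` by `min_Q (w ⬝ᵥ ·)`
gives the cut.
-/

open Pointwise

theorem LinearMap.apply_nonneg_of_bddBelow_image_of_isUpperSet {E : Type*} [AddCommGroup E]
    [PartialOrder E] [IsOrderedAddMonoid E] [Module ℝ E] [PosSMulMono ℝ E] (f : E →ₗ[ℝ] ℝ)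
    {S : Set E} (hup : IsUpperSet S) (hne : S.Nonempty) (hbdd : BddBelow (f '' S))
    {r : E} (hr : 0 ≤ r) : 0 ≤ f r := by
  obtain ⟨s, hs⟩ := hne
  obtain ⟨u, hu⟩ := hbdd
  by_contra! hfr
  set t := (f s - u + 1) / -f r
  have ht : 0 ≤ t := div_nonneg (by linarith [hu ⟨s, hs, rfl⟩]) (by linarith)
  have hmem : s + t • r ∈ S := hup (le_add_of_nonneg_right (smul_nonneg ht hr)) hs
  have hval : f (s + t • r) = u - 1 := by
    have : f r ≠ 0 := hfr.ne
    simp only [map_add, map_smul, smul_eq_mul, t]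
    field_simp
    ring
  linarith [hu ⟨_, hmem, hval⟩]

theorem exists_nonneg_dotProduct_separation {ι : Type*} [Fintype ι]
    {S : Set (ι → ℝ)} (hconv : Convex ℝ S) (hclosed : IsClosed S) (hup : IsUpperSet S)
    (hne : S.Nonempty) {x : ι → ℝ} (hx : x ∉ S) :
    ∃ w : ι → ℝ, 0 ≤ w ∧ ∃ u, w ⬝ᵥ x < u ∧ ∀ s ∈ S, u < w ⬝ᵥ s := by
  classical
  obtain ⟨f, u, hfx, hfS⟩ := geometric_hahn_banach_point_closed hconv hclosed hx
  set w : ι → ℝ := fun i => f (Pi.single i 1)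
  have hf : ∀ y, f y = w ⬝ᵥ y := fun y => by
    conv_lhs => rw [pi_eq_sum_univ' y]
    simp [w, dotProduct, mul_comm]
  have hbdd : BddBelow (f.toLinearMap '' S) := ⟨u, by
    rintro _ ⟨s, hs, rfl⟩
    exact (hfS s hs).le⟩
  refine ⟨w, fun i => ?_, u, hf x ▸ hfx, fun s hs => hf s ▸ hfS s hs⟩
  exact f.toLinearMap.apply_nonneg_of_bddBelow_image_of_isUpperSet hup hne hbdd
    (Pi.single_nonneg.2 zero_le_one)

theorem dotProduct_pos_of_nonneg_of_ne_zero {ι : Type*} [Fintype ι] {w y : ι → ℝ}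
    (hw : 0 ≤ w) (hw0 : w ≠ 0) (hy : ∀ i, 0 < y i) : 0 < w ⬝ᵥ y := by
  obtain ⟨i, hi⟩ := Function.ne_iff.1 hw0
  exact Finset.sum_pos' (fun j _ => mul_nonneg (hw j) (hy j).le)
    ⟨i, Finset.mem_univ i, mul_pos (lt_of_le_of_ne (hw i) (Ne.symm hi)) (hy i)⟩

theorem exists_dotProduct_cut_of_finite {ι : Type*} [Fintype ι] {Q : Set (ι → ℝ)}
    (hfin : Q.Finite) (hne : Q.Nonempty) {w x : ι → ℝ} (hw : 0 ≤ w)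
    (hQ : ∀ y ∈ Q, 0 < w ⬝ᵥ y) (hx : ∀ y ∈ Q, w ⬝ᵥ x < w ⬝ᵥ y) :
    ∃ v : ι → ℝ, 0 ≤ v ∧ (∀ y ∈ Q, 1 ≤ v ⬝ᵥ y) ∧ v ⬝ᵥ x < 1 := by
  obtain ⟨y₀, hy₀, hmin⟩ := Set.exists_min_image Q (w ⬝ᵥ ·) hfin hne
  have hm := hQ y₀ hy₀
  refine ⟨(w ⬝ᵥ y₀)⁻¹ • w, smul_nonneg (inv_nonneg.2 hm.le) hw, fun y hy => ?_, ?_⟩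
  · rw [smul_dotProduct, smul_eq_mul, one_le_inv_mul₀ hm]
    exact hmin y hy
  · rw [smul_dotProduct, smul_eq_mul, inv_mul_lt_one₀ hm]
    exact hx y₀ hy₀

theorem target_cut_oracle_complete
    (p : ℕ) (Q : Set (Fin p → ℝ)) (hfin : Q.Finite) (hne : Q.Nonempty)
    (hpos : ∀ y ∈ Q, ∀ i, 0 < y i)
    (ystar : Fin p → ℝ)
    (hout : ystar ∉ convexHull ℝ Q + {r : Fin p → ℝ | ∀ i, 0 ≤ r i}) :
    ∃ w : Fin p → ℝ, (∀ i, 0 ≤ w i) ∧ (∀ y ∈ Q, 1 ≤ ∑ i, w i * y i) ∧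
      ∑ i, w i * ystar i < 1 := by
  set S := convexHull ℝ Q + Set.Ici (0 : Fin p → ℝ)
  have hconv : Convex ℝ S := (convex_convexHull ℝ Q).add (convex_Ici 0)
  have hclosed : IsClosed S := isClosed_Ici.add_left_of_isCompact (hfin.isCompact_convexHull ℝ)
  have hup : IsUpperSet S := (isUpperSet_Ici 0).add_left
  have hQS : Q ⊆ S := fun y hy => ⟨y, subset_convexHull ℝ Q hy, 0, Set.mem_Ici.2 le_rfl, add_zero y⟩
  obtain ⟨w, hw, u, hwx, hwS⟩ :=
    exists_nonneg_dotProduct_separation hconv hclosed hup (hne.mono hQS) hout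
  have hw0 : w ≠ 0 := by
    rintro rfl
    obtain ⟨y, hy⟩ := hne
    linarith [hwS y (hQS hy), zero_dotProduct ystar, zero_dotProduct y]
  exact exists_dotProduct_cut_of_finite hfin hne hw
    (fun y hy => dotProduct_pos_of_nonneg_of_ne_zero hw hw0 (hpos y hy))
    (fun y hy => hwx.trans (hwS y (hQS hy)))
end

section
/- Facet-supporting extreme weights: let Q ⊆ ℝ^p be a nonempty finite set with strictly positive coordinates, Q⁺ = conv(Q) + ℝ^p_{≥0}, and W = { w ∈ ℝ^p_{≥0} : wᵀy ≥ 1 for all y ∈ Q }. If ŵ is an extreme point of W with ŵ ≠ 0, then the set F = { z ∈ Q⁺ : ŵᵀz = 1 } is a face of Q⁺ of dimension p − 1 (a facet), provided Q⁺ is full-dimensional. -/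
/-!
Perturbing an extreme point `ŵ` of the polyhedron `W` along a direction `u` that is orthogonal to
all tight points `y ∈ Q` (those with `ŵ ⬝ᵥ y = 1`) and vanishes on the zero coordinates of `ŵ`
keeps it in `W` for small steps, so such a `u` must be zero. Taking `u = ŵ` shows that some
`y₀ ∈ Q` is tight. The face `F = Q⁺ ∩ {ŵ ⬝ᵥ z = 1}` contains every tight point and every
`y₀ + eᵢ` with `ŵ i = 0`, so the direction of `F` together with `y₀` spans `ℝ^p`; as that
direction lies in the hyperplane `ŵ ⬝ᵥ z = 0`, which misses `y₀`, it has dimension `p - 1`.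
-/

open Pointwise Matrix Module Filter Topology

theorem isExtreme_sep_eq_of_forall_le {𝕜 E : Type*} [Field 𝕜] [LinearOrder 𝕜]
    [IsStrictOrderedRing 𝕜] [AddCommGroup E] [Module 𝕜 E] {A : Set E} (φ : E →ₗ[𝕜] 𝕜) {c : 𝕜}
    (hA : ∀ z ∈ A, c ≤ φ z) : IsExtreme 𝕜 A {z ∈ A | φ z = c} := by
  refine ⟨Set.sep_subset _ _, ?_⟩
  rintro x hx y hy _ ⟨-, hc⟩ ⟨a, b, ha, hb, hab, rfl⟩
  simp only [map_add, map_smul, smul_eq_mul] at hc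
  refine ⟨hx, le_antisymm ?_ (hA x hx)⟩
  by_contra! hlt
  have hsum : (a + b) * c = c := by rw [hab, one_mul]
  linarith [mul_lt_mul_of_pos_left hlt ha, mul_le_mul_of_nonneg_left (hA y hy) hb.le]

theorem finrank_direction_affineSpan_add_one {K E : Type*} [Field K] [AddCommGroup E]
    [Module K E] [FiniteDimensional K E] {s : Set E} {φ : E →ₗ[K] K} {y₀ : E}
    (hs : ∀ z ∈ s, φ z = φ y₀) (hy₀ : φ y₀ ≠ 0)
    (htop : (affineSpan K s).direction ⊔ K ∙ y₀ = ⊤) :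
    finrank K (affineSpan K s).direction + 1 = finrank K E := by
  have hker : (affineSpan K s).direction ≤ LinearMap.ker φ := by
    rw [direction_affineSpan, vectorSpan_def, Submodule.span_le]
    rintro _ ⟨x, hx, y, hy, rfl⟩
    simp [hs x hx, hs y hy]
  have hdisj : Disjoint (affineSpan K s).direction (K ∙ y₀) :=
    Submodule.disjoint_span_singleton.2 fun h => absurd (hker h) hy₀
  have hne : y₀ ≠ 0 := by rintro rfl; simp at hy₀
  rw [← Submodule.finrank_add_eq_of_isCompl ⟨hdisj, codisjoint_iff.2 htop⟩,
    finrank_span_singleton hne]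

theorem Submodule.eq_top_of_forall_dotProduct_eq_zero {K ι : Type*} [Field K] [Fintype ι]
    {V : Submodule K (ι → K)} (h : ∀ u, (∀ v ∈ V, u ⬝ᵥ v = 0) → u = 0) : V = ⊤ := by
  classical
  rw [← dualAnnihilator_eq_bot_iff, eq_bot_iff]
  intro f hf
  obtain ⟨u, rfl⟩ := (dotProductEquiv K ι).surjective f
  rw [mem_dualAnnihilator] at hf
  simp [h u hf]

theorem eq_zero_of_mem_extremePoints_of_forall_active {E ι : Type*} [AddCommGroup E]
    [Module ℝ E] [Finite ι] {a : ι → E →ₗ[ℝ] ℝ} {b : ι → ℝ} {w u : E}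
    (hw : w ∈ Set.extremePoints ℝ {x | ∀ i, b i ≤ a i x})
    (hu : ∀ i, a i w = b i → a i u = 0) : u = 0 := by
  have hnear : ∀ᶠ t in 𝓝 (0 : ℝ), w + t • u ∈ {x | ∀ i, b i ≤ a i x} := by
    refine eventually_all.2 fun i => ?_
    simp only [map_add, map_smul, smul_eq_mul]
    rcases (hw.1 i).eq_or_lt with hi | hi
    · exact .of_forall fun t => by simp [← hi, hu i hi.symm]
    · have hcont : Continuous fun t : ℝ => a i w + t * a i u := by fun_prop
      exact (hcont.tendsto' 0 _ (by simp)).eventually (lt_mem_nhds hi) |>.mono fun _ => le_of_lt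
  have hsymm : ∀ᶠ t in 𝓝[≠] (0 : ℝ), t ≠ 0 ∧ w + t • u ∈ {x | ∀ i, b i ≤ a i x} ∧
      w + (-t) • u ∈ {x | ∀ i, b i ≤ a i x} :=
    eventually_mem_nhdsWithin.and <| nhdsWithin_le_nhds <|
      hnear.and ((continuous_neg.tendsto' (0 : ℝ) 0 neg_zero).eventually hnear)
  obtain ⟨t, ht, hplus, hminus⟩ := hsymm.exists
  have hmid : w ∈ openSegment ℝ (w + t • u) (w + (-t) • u) :=
    ⟨1 / 2, 1 / 2, by norm_num, by norm_num, by norm_num, by module⟩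
  simpa [ht] using hw.2 hplus hminus hmid

section Weights

variable {ι : Type*} [Fintype ι] {Q : Set (ι → ℝ)} {w : ι → ℝ}

def weightPolyhedron (Q : Set (ι → ℝ)) : Set (ι → ℝ) :=
  {w | (∀ i, 0 ≤ w i) ∧ ∀ y ∈ Q, 1 ≤ ∑ i, w i * y i}

theorem le_dotProduct_of_mem_convexHull_add_nonneg {c : ℝ} (hw : 0 ≤ w)
    (hQ : ∀ y ∈ Q, c ≤ w ⬝ᵥ y) {z : ι → ℝ}
    (hz : z ∈ convexHull ℝ Q + {r : ι → ℝ | ∀ i, 0 ≤ r i}) : c ≤ w ⬝ᵥ z := by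
  obtain ⟨x, hx, r, hr, rfl⟩ := hz
  have hx : c ≤ w ⬝ᵥ x :=
    convexHull_min hQ (convex_halfSpace_ge (dotProductBilin ℝ ℝ w).isLinear c) hx
  have hr : 0 ≤ w ⬝ᵥ r := dotProduct_nonneg_of_nonneg hw hr
  rw [dotProduct_add]
  linarith

theorem eq_zero_of_mem_extremePoints_weightPolyhedron (hfin : Q.Finite) {u : ι → ℝ}
    (hw : w ∈ Set.extremePoints ℝ (weightPolyhedron Q))
    (hcoord : ∀ i, w i = 0 → u i = 0) (hQ : ∀ y ∈ Q, w ⬝ᵥ y = 1 → u ⬝ᵥ y = 0) : u = 0 := by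
  have := hfin.to_subtype
  let a : ι ⊕ Q → (ι → ℝ) →ₗ[ℝ] ℝ :=
    Sum.elim (LinearMap.proj ·) fun y => (dotProductBilin ℝ ℝ).flip y
  let b : ι ⊕ Q → ℝ := Sum.elim 0 1
  have hset : weightPolyhedron Q = {x | ∀ c, b c ≤ a c x} := by
    ext
    simp [weightPolyhedron, a, b, Sum.forall, dotProduct]
  rw [hset] at hw
  exact eq_zero_of_mem_extremePoints_of_forall_active hw (Sum.rec hcoord fun y => hQ y y.2)

theorem direction_sup_span_eq_top_of_mem_extremePoints_weightPolyhedron [DecidableEq ι]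
    (hfin : Q.Finite)
    (hw : w ∈ Set.extremePoints ℝ (weightPolyhedron Q))
    {F : Set (ι → ℝ)} {y₀ : ι → ℝ} (hy₀ : y₀ ∈ F) (hQF : ∀ y ∈ Q, w ⬝ᵥ y = 1 → y ∈ F)
    (hcoordF : ∀ i, w i = 0 → y₀ + Pi.single i 1 ∈ F) :
    (affineSpan ℝ F).direction ⊔ ℝ ∙ y₀ = ⊤ := by
  have hdir {z} (hz : z ∈ F) : z - y₀ ∈ (affineSpan ℝ F).direction :=
    AffineSubspace.vsub_mem_direction (subset_affineSpan ℝ F hz) (subset_affineSpan ℝ F hy₀)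
  refine Submodule.eq_top_of_forall_dotProduct_eq_zero fun u hu =>
    eq_zero_of_mem_extremePoints_weightPolyhedron hfin hw (fun i hi => ?_) fun y hy h1 => ?_
  · have hei : Pi.single i 1 ∈ (affineSpan ℝ F).direction ⊔ ℝ ∙ y₀ :=
      Submodule.mem_sup_left (by simpa using hdir (hcoordF i hi))
    simpa [dotProduct_single] using hu (Pi.single i 1) hei
  · exact hu y (by simpa using
      Submodule.add_mem_sup (hdir (hQF y hy h1)) (Submodule.mem_span_singleton_self y₀))

end Weights

theorem extreme_weight_gives_facet_general
    (p : ℕ) (Q : Set (Fin p → ℝ)) (hfin : Q.Finite)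
    (Qplus : Set (Fin p → ℝ))
    (hQplus : Qplus = convexHull ℝ Q + {r : Fin p → ℝ | ∀ i, 0 ≤ r i})
    (what : Fin p → ℝ)
    (hext : what ∈ Set.extremePoints ℝ
      {w : Fin p → ℝ | (∀ i, 0 ≤ w i) ∧ ∀ y ∈ Q, 1 ≤ ∑ i, w i * y i})
    (hnz : what ≠ 0) :
    IsExtreme ℝ Qplus {z ∈ Qplus | ∑ i, what i * z i = 1} ∧
      Module.finrank ℝ
        (affineSpan ℝ {z ∈ Qplus | ∑ i, what i * z i = 1}).direction = p - 1 := by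
  set F := {z ∈ Qplus | ∑ i, what i * z i = 1}
  obtain ⟨hwnn, hwQ⟩ := hext.1
  have hshift : ∀ y ∈ Q, ∀ r : Fin p → ℝ, 0 ≤ r → y + r ∈ Qplus := fun y hy r hr =>
    hQplus ▸ Set.add_mem_add (subset_convexHull ℝ Q hy) hr
  have hQF : ∀ y ∈ Q, what ⬝ᵥ y = 1 → y ∈ F := fun y hy h1 =>
    ⟨by simpa using hshift y hy 0 le_rfl, h1⟩
  obtain ⟨y₀, hy₀Q, hy₀⟩ : ∃ y ∈ Q, what ⬝ᵥ y = 1 := by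
    by_contra! h
    exact hnz (eq_zero_of_mem_extremePoints_weightPolyhedron hfin hext (fun _ => id)
      fun y hy h1 => absurd h1 (h y hy))
  refine ⟨isExtreme_sep_eq_of_forall_le (dotProductBilin ℝ ℝ what) fun z hz =>
    le_dotProduct_of_mem_convexHull_add_nonneg hwnn hwQ (hQplus ▸ hz), ?_⟩
  have htop := direction_sup_span_eq_top_of_mem_extremePoints_weightPolyhedron hfin hext
    (hQF y₀ hy₀Q hy₀) hQF fun i hi =>
      ⟨hshift y₀ hy₀Q _ (Pi.single_nonneg.2 zero_le_one),
        show what ⬝ᵥ (y₀ + Pi.single i 1) = 1 by simp [dotProduct_add, hy₀, hi]⟩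
  have := finrank_direction_affineSpan_add_one (φ := dotProductBilin ℝ ℝ what)
    (fun z hz => hz.2.trans hy₀.symm) (by simp [hy₀]) htop
  rw [Module.finrank_fin_fun] at this
  omega

theorem extreme_weight_gives_facet
    (p : ℕ) (Q : Set (Fin p → ℝ)) (hfin : Q.Finite) (hne : Q.Nonempty)
    (hpos : ∀ y ∈ Q, ∀ i, 0 < y i)
    (Qplus : Set (Fin p → ℝ))
    (hQplus : Qplus = convexHull ℝ Q + {r : Fin p → ℝ | ∀ i, 0 ≤ r i})
    (hfull : Module.finrank ℝ (affineSpan ℝ Qplus).direction = p)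
    (what : Fin p → ℝ)
    (hext : what ∈ Set.extremePoints ℝ
      {w : Fin p → ℝ | (∀ i, 0 ≤ w i) ∧ ∀ y ∈ Q, 1 ≤ ∑ i, w i * y i})
    (hnz : what ≠ 0) :
    IsExtreme ℝ Qplus {z ∈ Qplus | ∑ i, what i * z i = 1} ∧
      Module.finrank ℝ
        (affineSpan ℝ {z ∈ Qplus | ∑ i, what i * z i = 1}).direction = p - 1 :=
  extreme_weight_gives_facet_general p Q hfin Qplus hQplus what hext hnz
end

section
/- If ŷ ∈ Q is an extreme point of Q⁺ = conv(Q) + ℝ^p_{≥0} for a nonempty finite Q ⊆ ℝ^p, then ŷ is a nondominated point of Q. -/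
open Pointwise

theorem IsUpperSet.eq_of_le_of_mem_extremePoints {𝕜 E : Type*} [Ring 𝕜] [LinearOrder 𝕜]
    [IsStrictOrderedRing 𝕜] [Invertible (2 : 𝕜)] [AddCommGroup E] [PartialOrder E]
    [IsOrderedAddMonoid E] [Module 𝕜 E] {S : Set E} (hS : IsUpperSet S) {x y : E}
    (hx : x ∈ S.extremePoints 𝕜) (hy : y ∈ S) (hyx : y ≤ x) : y = x := by
  have hseg : x ∈ openSegment 𝕜 y (x + (x - y)) := by
    simpa only [sub_sub_cancel] using mem_openSegment_sub_add (𝕜 := 𝕜) x (x - y)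
  have hup : x + (x - y) ∈ S := hS (le_add_of_nonneg_right (sub_nonneg.2 hyx)) hx.1
  exact hx.2 hy hup hseg

theorem extreme_point_is_nondominated_general
    (p : ℕ) (Q : Set (Fin p → ℝ))
    (yhat : Fin p → ℝ)
    (hext : yhat ∈ (convexHull ℝ Q + {r : Fin p → ℝ | ∀ i, 0 ≤ r i}).extremePoints ℝ) :
    ¬ ∃ y ∈ Q, (∀ i, y i ≤ yhat i) ∧ y ≠ yhat := by
  rintro ⟨y, hyQ, hle, hne⟩
  have horthant : {r : Fin p → ℝ | ∀ i, 0 ≤ r i} = Set.Ici 0 := by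
    ext r; simp [Pi.le_def]
  rw [horthant] at hext
  have hupper : IsUpperSet (convexHull ℝ Q + Set.Ici 0) := (isUpperSet_Ici 0).add_left
  have hy : y ∈ convexHull ℝ Q + Set.Ici 0 :=
    ⟨y, subset_convexHull ℝ Q hyQ, 0, Set.self_mem_Ici, add_zero y⟩
  exact hne (hupper.eq_of_le_of_mem_extremePoints hext hy hle)

theorem extreme_point_is_nondominated
    (p : ℕ) (Q : Set (Fin p → ℝ)) (hfin : Q.Finite) (hne : Q.Nonempty)
    (yhat : Fin p → ℝ) (hyQ : yhat ∈ Q)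
    (hext : yhat ∈ (convexHull ℝ Q + {r : Fin p → ℝ | ∀ i, 0 ≤ r i}).extremePoints ℝ) :
    ¬ ∃ y ∈ Q, (∀ i, y i ≤ yhat i) ∧ y ≠ yhat :=
  extreme_point_is_nondominated_general p Q yhat hext
end
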